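/- arXiv:math/0611635 — 4 statements merged into one kernel-verified Lean document; each statement's English description precedes it below -/
import Mathlib

section
/- In the free (product measure) case μ = ∏_{i∈T} μ_i on E^T with T finite, the Efron–Stein inequality holds: Var_μ(f) ≤ E^μ ∑_{i∈T} Var_{μ_i}(f(x with i-th coordinate varying)) for all f ∈ L²(μ). -/
/-!
Write `Eᵢ g` for the average of `g` over the `i`-th coordinate. Integrating the one-variable
variance formula gives `∫ g² = ∫ (Eᵢ g)² + ∫ (g - Eᵢ g)²`, where `∫ (g - Eᵢ g)²` is the integrated
`i`-th conditional variance; by Fubini the `Eᵢ` commute, and applying all of them turns `f` into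
the constant `∫ f`. Apply them to `f` one coordinate at a time: the step `g ↦ Eᵢ g` lowers `∫ g²`
by `∫ (g - Eᵢ g)² = ∫ (A (f - Eᵢ f))²`, where `A` averages over the coordinates already used;
as `A` does not increase `L²` norms, each loss is at most `∫ (f - Eᵢ f)²`.
-/

open Function

theorem apply_eq_of_forall_apply_update_eq {ι β : Type*} [Fintype ι] [DecidableEq ι]
    {α : ι → Type*} {h : (∀ i, α i) → β} (hh : ∀ i x z, h (update x i z) = h x)
    (x y : ∀ i, α i) : h x = h y := by
  suffices ∀ s : Finset ι, h (s.piecewise y x) = h x by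
    simpa using (this Finset.univ).symm
  intro s
  induction s using Finset.induction_on with
  | empty => simp
  | insert i s _ ih => rw [Finset.piecewise_insert, hh, ih]

namespace MeasureTheory

open ProbabilityTheory

variable {ι : Type*} [DecidableEq ι] {α : ι → Type*} [∀ i, MeasurableSpace (α i)]

theorem measurePreserving_update [Fintype ι] (μ : ∀ i, Measure (α i)) [∀ i, SigmaFinite (μ i)]
    (i : ι) [IsProbabilityMeasure (μ i)] :
    MeasurePreserving (fun p : (∀ j, α j) × α i => update p.1 i p.2)
      ((Measure.pi μ).prod (μ i)) (Measure.pi μ) := by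
  refine ⟨measurable_update', (Measure.pi_eq fun s hs => ?_).symm⟩
  have hpre : (fun p : (∀ j, α j) × α i => update p.1 i p.2) ⁻¹' Set.univ.pi s
      = Set.univ.pi (update s i Set.univ) ×ˢ s i := by
    ext ⟨x, z⟩
    simp only [Set.mem_preimage, Set.mem_prod, Set.mem_univ_pi]
    rw [forall_update_iff x (p := fun j y => y ∈ s j),
      forall_update_iff s (p := fun j t => x j ∈ t)]
    simp [and_comm]
  rw [Measure.map_apply measurable_update' (.univ_pi hs), hpre, Measure.prod_prod, Measure.pi_pi]
  rw [← Finset.prod_erase_mul _ _ (Finset.mem_univ i),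
    ← Finset.prod_erase_mul _ _ (Finset.mem_univ i)]
  simp only [update_self, measure_univ, mul_one]
  exact congrArg (· * _) <| Finset.prod_congr rfl fun j hj => by
    rw [update_of_ne (Finset.ne_of_mem_erase hj)]

noncomputable def coordMean (μ : ∀ i, Measure (α i)) (i : ι) (g : (∀ j, α j) → ℝ)
    (x : ∀ j, α j) : ℝ :=
  ∫ z, g (update x i z) ∂μ i

noncomputable def coordVar (μ : ∀ i, Measure (α i)) (i : ι) (g : (∀ j, α j) → ℝ)
    (x : ∀ j, α j) : ℝ :=
  coordMean μ i (fun y => g y ^ 2) x - coordMean μ i g x ^ 2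

section coordMean

variable {μ : ∀ i, Measure (α i)} {i j : ι} {g h : (∀ j, α j) → ℝ}

theorem coordMean_update_self (x : ∀ j, α j) (z : α i) :
    coordMean μ i g (update x i z) = coordMean μ i g x := by
  simp only [coordMean, update_idem]

theorem coordMean_update_of_ne (hij : i ≠ j) (x : ∀ j, α j) (z : α j) :
    coordMean μ i g (update x j z) = coordMean μ i (fun y => g (update y j z)) x := by
  simp only [coordMean, update_comm hij]

variable [Fintype ι] [∀ i, IsProbabilityMeasure (μ i)]

theorem Integrable.comp_update (hg : Integrable g (Measure.pi μ)) :
    Integrable (fun p : (∀ j, α j) × α i => g (update p.1 i p.2)) ((Measure.pi μ).prod (μ i)) :=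
  (measurePreserving_update μ i).integrable_comp_of_integrable hg

theorem Integrable.coordMean (hg : Integrable g (Measure.pi μ)) :
    Integrable (coordMean μ i g) (Measure.pi μ) :=
  hg.comp_update.integral_prod_left

theorem AEStronglyMeasurable.coordMean (hg : AEStronglyMeasurable g (Measure.pi μ)) :
    AEStronglyMeasurable (coordMean μ i g) (Measure.pi μ) :=
  (hg.comp_measurePreserving (measurePreserving_update μ i)).integral_prod_right'

theorem integral_coordMean (hg : Integrable g (Measure.pi μ)) :
    ∫ x, coordMean μ i g x ∂Measure.pi μ = ∫ x, g x ∂Measure.pi μ := by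
  have hmp := measurePreserving_update μ i
  calc ∫ x, coordMean μ i g x ∂Measure.pi μ
      = ∫ p, g (update p.1 i p.2) ∂(Measure.pi μ).prod (μ i) :=
        (integral_prod _ hg.comp_update).symm
    _ = ∫ y, g y ∂Measure.map (fun p : (∀ j, α j) × α i => update p.1 i p.2)
          ((Measure.pi μ).prod (μ i)) :=
        (integral_map hmp.measurable.aemeasurable (by rw [hmp.map_eq]; exact hg.1)).symm
    _ = ∫ x, g x ∂Measure.pi μ := by rw [hmp.map_eq]

theorem ae_memLp_update (hg : MemLp g 2 (Measure.pi μ)) :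
    ∀ᵐ x ∂Measure.pi μ, MemLp (fun z => g (update x i z)) 2 (μ i) := by
  have hcomp := hg.comp_measurePreserving (measurePreserving_update μ i)
  filter_upwards [hcomp.1.prodMk_left, hcomp.integrable_sq.prod_right_ae] with x hm hi
  exact (memLp_two_iff_integrable_sq hm).2 hi

theorem coordMean_sq_sub_coordMean_ae_eq_coordVar (hg : MemLp g 2 (Measure.pi μ)) :
    coordMean μ i (fun y => (g y - coordMean μ i g y) ^ 2) =ᵐ[Measure.pi μ] coordVar μ i g := by
  filter_upwards [ae_memLp_update hg] with x hx
  simp only [coordMean, update_idem]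
  rw [← variance_eq_integral hx.aemeasurable, variance_eq_sub hx]
  rfl

theorem coordVar_nonneg_ae (hg : MemLp g 2 (Measure.pi μ)) :
    0 ≤ᵐ[Measure.pi μ] coordVar μ i g := by
  filter_upwards [ae_memLp_update hg] with x hx
  have := variance_nonneg (fun z => g (update x i z)) (μ i)
  rw [variance_eq_sub hx] at this
  simpa [coordVar, coordMean] using this

theorem MemLp.coordMean (hg : MemLp g 2 (Measure.pi μ)) :
    MemLp (coordMean μ i g) 2 (Measure.pi μ) := by
  rw [memLp_two_iff_integrable_sq hg.1.coordMean]
  refine (hg.integrable_sq.coordMean (i := i)).mono' (hg.1.coordMean.pow 2) ?_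
  filter_upwards [coordVar_nonneg_ae (i := i) hg] with x hx
  rw [Real.norm_of_nonneg (sq_nonneg _)]
  exact sub_nonneg.1 hx

theorem integrable_coordVar (hg : MemLp g 2 (Measure.pi μ)) :
    Integrable (coordVar μ i g) (Measure.pi μ) :=
  hg.integrable_sq.coordMean.sub hg.coordMean.integrable_sq

theorem integral_coordVar (hg : MemLp g 2 (Measure.pi μ)) :
    ∫ x, coordVar μ i g x ∂Measure.pi μ = ∫ x, (g x - coordMean μ i g x) ^ 2 ∂Measure.pi μ := by
  calc ∫ x, coordVar μ i g x ∂Measure.pi μ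
      = ∫ x, coordMean μ i (fun y => (g y - coordMean μ i g y) ^ 2) x ∂Measure.pi μ :=
        integral_congr_ae (coordMean_sq_sub_coordMean_ae_eq_coordVar hg).symm
    _ = _ := integral_coordMean (hg.sub hg.coordMean).integrable_sq

theorem integral_sq_sub_coordMean (hg : MemLp g 2 (Measure.pi μ)) :
    ∫ x, (g x - coordMean μ i g x) ^ 2 ∂Measure.pi μ
      = ∫ x, g x ^ 2 ∂Measure.pi μ - ∫ x, coordMean μ i g x ^ 2 ∂Measure.pi μ := by
  rw [← integral_coordVar hg]
  unfold coordVar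
  rw [integral_sub hg.integrable_sq.coordMean
    hg.coordMean.integrable_sq, integral_coordMean hg.integrable_sq]

theorem integral_sq_coordMean_le (hg : MemLp g 2 (Measure.pi μ)) :
    ∫ x, coordMean μ i g x ^ 2 ∂Measure.pi μ ≤ ∫ x, g x ^ 2 ∂Measure.pi μ := by
  have hpyth := integral_sq_sub_coordMean (i := i) hg
  have hnonneg : 0 ≤ ∫ x, (g x - coordMean μ i g x) ^ 2 ∂Measure.pi μ :=
    integral_nonneg fun x => sq_nonneg _
  linarith

theorem coordMean_sub_ae_eq (hg : Integrable g (Measure.pi μ)) (hh : Integrable h (Measure.pi μ)) :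
    coordMean μ i (fun y => g y - h y) =ᵐ[Measure.pi μ]
      fun x => coordMean μ i g x - coordMean μ i h x := by
  filter_upwards [(hg.comp_update (i := i)).prod_right_ae, (hh.comp_update (i := i)).prod_right_ae]
    with x hgx hhx using integral_sub hgx hhx

theorem coordMean_comm_ae_eq (hij : i ≠ j) (hg : Integrable g (Measure.pi μ)) :
    coordMean μ i (coordMean μ j g) =ᵐ[Measure.pi μ] coordMean μ j (coordMean μ i g) := by
  have hmp : MeasurePreserving
      (fun r : (∀ k, α k) × α i × α j => update (update r.1 i r.2.1) j r.2.2)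
      ((Measure.pi μ).prod ((μ i).prod (μ j))) (Measure.pi μ) :=
    (measurePreserving_update μ j).comp <|
      ((measurePreserving_update μ i).prod (.id (μ j))).comp
        (measurePreserving_prodAssoc _ _ _).symm
  filter_upwards [(hmp.integrable_comp_of_integrable hg).prod_right_ae] with x hx
  simp only [coordMean]
  rw [integral_integral_swap hx]
  simp only [update_comm hij]

theorem integral_sq_sub_coordMean_coordMean_le (hij : i ≠ j) (hg : MemLp g 2 (Measure.pi μ)) :
    ∫ x, (coordMean μ j g x - coordMean μ i (coordMean μ j g) x) ^ 2 ∂Measure.pi μ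
      ≤ ∫ x, (g x - coordMean μ i g x) ^ 2 ∂Measure.pi μ := by
  have hg1 := hg.integrable one_le_two
  calc ∫ x, (coordMean μ j g x - coordMean μ i (coordMean μ j g) x) ^ 2 ∂Measure.pi μ
      = ∫ x, coordMean μ j (fun y => g y - coordMean μ i g y) x ^ 2 ∂Measure.pi μ := by
        refine integral_congr_ae ?_
        filter_upwards [coordMean_comm_ae_eq hij hg1,
          coordMean_sub_ae_eq (i := j) hg1 ((hg.coordMean (i := i)).integrable one_le_two)]
          with x hcomm hsub
        rw [hcomm, hsub]
    _ ≤ ∫ x, (g x - coordMean μ i g x) ^ 2 ∂Measure.pi μ :=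
        integral_sq_coordMean_le (hg.sub hg.coordMean)

end coordMean

noncomputable def iteratedCoordMean (μ : ∀ i, Measure (α i)) (l : List ι)
    (g : (∀ j, α j) → ℝ) : (∀ j, α j) → ℝ :=
  l.foldr (coordMean μ) g

theorem iteratedCoordMean_cons (μ : ∀ i, Measure (α i)) (i : ι) (l : List ι)
    (g : (∀ j, α j) → ℝ) :
    iteratedCoordMean μ (i :: l) g = coordMean μ i (iteratedCoordMean μ l g) :=
  rfl

section iteratedCoordMean

variable {μ : ∀ i, Measure (α i)} {i : ι} {l : List ι} {g : (∀ j, α j) → ℝ}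

theorem iteratedCoordMean_update {j : ι} (hj : j ∈ l) (x : ∀ k, α k) (z : α j) :
    iteratedCoordMean μ l g (update x j z) = iteratedCoordMean μ l g x := by
  induction l generalizing x with
  | nil => simp at hj
  | cons i l ih =>
    rw [iteratedCoordMean_cons]
    by_cases hji : j = i
    · subst hji
      exact coordMean_update_self x z
    · rw [coordMean_update_of_ne (Ne.symm hji)]
      simp only [ih (List.mem_of_ne_of_mem hji hj)]

variable [Fintype ι] [∀ i, IsProbabilityMeasure (μ i)]

theorem MemLp.iteratedCoordMean (hg : MemLp g 2 (Measure.pi μ)) :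
    MemLp (iteratedCoordMean μ l g) 2 (Measure.pi μ) := by
  induction l with
  | nil => exact hg
  | cons i l ih => exact ih.coordMean

theorem integral_iteratedCoordMean (hg : MemLp g 2 (Measure.pi μ)) :
    ∫ x, iteratedCoordMean μ l g x ∂Measure.pi μ = ∫ x, g x ∂Measure.pi μ := by
  induction l with
  | nil => rfl
  | cons i l ih => exact (integral_coordMean (hg.iteratedCoordMean.integrable one_le_two)).trans ih

theorem integral_sq_iteratedCoordMean (hl : ∀ i, i ∈ l) (hg : MemLp g 2 (Measure.pi μ)) :
    ∫ x, iteratedCoordMean μ l g x ^ 2 ∂Measure.pi μ = (∫ x, g x ∂Measure.pi μ) ^ 2 := by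
  obtain ⟨x₀⟩ := nonempty_of_isProbabilityMeasure (Measure.pi μ)
  have hconst : iteratedCoordMean μ l g = fun _ => iteratedCoordMean μ l g x₀ :=
    funext fun x => apply_eq_of_forall_apply_update_eq
      (fun j => iteratedCoordMean_update (hl j)) x x₀
  rw [← integral_iteratedCoordMean (l := l) hg, hconst]
  simp

theorem integral_sq_sub_coordMean_iteratedCoordMean_le (hi : i ∉ l)
    (hg : MemLp g 2 (Measure.pi μ)) :
    ∫ x, (iteratedCoordMean μ l g x - coordMean μ i (iteratedCoordMean μ l g) x) ^ 2
        ∂Measure.pi μ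
      ≤ ∫ x, (g x - coordMean μ i g x) ^ 2 ∂Measure.pi μ := by
  induction l with
  | nil => rfl
  | cons j l ih =>
    exact (integral_sq_sub_coordMean_coordMean_le (List.ne_of_not_mem_cons hi)
      hg.iteratedCoordMean).trans (ih (List.not_mem_of_not_mem_cons hi))

theorem integral_sq_sub_integral_sq_iteratedCoordMean_le (hl : l.Nodup)
    (hg : MemLp g 2 (Measure.pi μ)) :
    ∫ x, g x ^ 2 ∂Measure.pi μ - ∫ x, iteratedCoordMean μ l g x ^ 2 ∂Measure.pi μ
      ≤ (l.map fun i => ∫ x, (g x - coordMean μ i g x) ^ 2 ∂Measure.pi μ).sum := by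
  induction l with
  | nil => simp [iteratedCoordMean]
  | cons i l ih =>
    have hpyth := integral_sq_sub_coordMean (i := i) (hg.iteratedCoordMean (l := l))
    have hstep := integral_sq_sub_coordMean_iteratedCoordMean_le (List.nodup_cons.1 hl).1 hg
    rw [iteratedCoordMean_cons, List.map_cons, List.sum_cons]
    linarith [ih (List.nodup_cons.1 hl).2]

end iteratedCoordMean

end MeasureTheory

open MeasureTheory

theorem efron_stein_general
    {E T : Type*} [MeasurableSpace E] [Fintype T] [DecidableEq T]
    (ν : T → Measure E) [∀ i, IsProbabilityMeasure (ν i)]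
    (f : (T → E) → ℝ) (hf2 : MemLp f 2 (Measure.pi ν)) :
    (∫ x, f x ^ 2 ∂(Measure.pi ν)) - (∫ x, f x ∂(Measure.pi ν)) ^ 2 ≤
      ∫ x, ∑ i, ((∫ z, (f (Function.update x i z)) ^ 2 ∂(ν i)) -
        (∫ z, f (Function.update x i z) ∂(ν i)) ^ 2) ∂(Measure.pi ν) := by
  have hmem : ∀ i, i ∈ (Finset.univ : Finset T).toList := fun i => by simp
  have h := integral_sq_sub_integral_sq_iteratedCoordMean_le Finset.univ.nodup_toList hf2
  rw [integral_sq_iteratedCoordMean hmem hf2, Finset.sum_map_toList] at h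
  change _ ≤ ∫ x, ∑ i, coordVar ν i f x ∂Measure.pi ν
  rwa [integral_finsetSum _ fun i _ => integrable_coordVar hf2,
    Finset.sum_congr rfl fun i _ => integral_coordVar hf2]

/-- Efron–Stein inequality: for a product probability measure `μ = ∏_{i∈T} μ_i` on `E^T`
with `T` finite, the variance of any `f ∈ L²(μ)` is bounded by the expected sum of the
conditional variances in each coordinate (the others being fixed). -/
theorem efron_stein
    {E T : Type*} [MeasurableSpace E] [Fintype T] [DecidableEq T]
    (ν : T → Measure E) [∀ i, IsProbabilityMeasure (ν i)]
    (f : (T → E) → ℝ) (hfm : Measurable f) (hf2 : MemLp f 2 (Measure.pi ν)) :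
    (∫ x, f x ^ 2 ∂(Measure.pi ν)) - (∫ x, f x ∂(Measure.pi ν)) ^ 2 ≤
      ∫ x, ∑ i, ((∫ z, (f (Function.update x i z)) ^ 2 ∂(ν i)) -
        (∫ z, f (Function.update x i z) ∂(ν i)) ^ 2) ∂(Measure.pi ν) :=
  efron_stein_general ν f hf2
end

section
/- If the diameter D := sup_{x,y∈E} d(x,y) of a metric space (E,d) is finite, then for any probability measure ν on E and any 1-Lipschitz function f, E^ν exp(f - ν(f)) ≤ exp(D²/8). -/
/-! A 1-Lipschitz function on a space of diameter `D` takes its values in an interval of length `D`,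
so after centering, Hoeffding's lemma (evaluated at `t = 1`) bounds its exponential moment by
`exp (D² / 8)`. -/

open MeasureTheory ProbabilityTheory Real NNReal

lemma exists_forall_mem_Icc_of_sub_le {ι : Type*} [Nonempty ι] {f : ι → ℝ} {D : ℝ}
    (h : ∀ x y, f x - f y ≤ D) : ∃ a, ∀ x, f x ∈ Set.Icc a (a + D) := by
  obtain ⟨x₀⟩ := ‹Nonempty ι›
  have hbdd : BddBelow (Set.range f) := ⟨f x₀ - D, by rintro _ ⟨y, rfl⟩; linarith [h x₀ y]⟩
  refine ⟨⨅ y, f y, fun x => ⟨ciInf_le hbdd x, ?_⟩⟩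
  have : f x - D ≤ ⨅ y, f y := le_ciInf fun y => by linarith [h x y]
  linarith

lemma integral_exp_sub_integral_le_of_mem_Icc {Ω : Type*} [MeasurableSpace Ω] {μ : Measure Ω}
    [IsProbabilityMeasure μ] {X : Ω → ℝ} {a b : ℝ} (hm : AEMeasurable X μ)
    (hb : ∀ᵐ ω ∂μ, X ω ∈ Set.Icc a b) :
    ∫ ω, exp (X ω - ∫ ω', X ω' ∂μ) ∂μ ≤ exp ((b - a) ^ 2 / 8) := by
  calc ∫ ω, exp (X ω - ∫ ω', X ω' ∂μ) ∂μ = mgf (fun ω => X ω - μ[X]) μ 1 := by simp [mgf]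
    _ ≤ exp ((‖b - a‖₊ / 2 : ℝ≥0) ^ 2 * 1 ^ 2 / 2) := (hasSubgaussianMGF_of_mem_Icc hm hb).mgf_le 1
    _ = exp ((b - a) ^ 2 / 8) := by
      congr 1
      push_cast
      rw [norm_eq_abs, div_pow, sq_abs]
      ring

lemma LipschitzWith.sub_le_diam {E : Type*} [PseudoMetricSpace E] {f : E → ℝ}
    (hf : LipschitzWith 1 f) (hD : Metric.ediam (Set.univ : Set E) ≠ ⊤) (x y : E) :
    f x - f y ≤ Metric.diam (Set.univ : Set E) :=
  calc f x - f y ≤ dist (f x) (f y) := le_abs_self _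
    _ ≤ dist x y := by simpa using hf.dist_le_mul x y
    _ ≤ _ := Metric.dist_le_diam_of_mem (Metric.isBounded_iff_ediam_ne_top.mpr hD) trivial trivial

/-- If a metric space `(E,d)` has finite diameter `D`, then for any Borel probability
measure `ν` on `E` and any `1`-Lipschitz `f : E → ℝ`,
`E^ν exp(f - ν(f)) ≤ exp(D²/8)`. -/
theorem exp_integrability_of_bounded_diameter
    {E : Type*} [MeasurableSpace E] [MetricSpace E] [BorelSpace E]
    (ν : Measure E) [IsProbabilityMeasure ν]
    (hD : EMetric.diam (Set.univ : Set E) ≠ ⊤)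
    (f : E → ℝ) (hf : LipschitzWith 1 f) :
    ∫ x, Real.exp (f x - ∫ y, f y ∂ν) ∂ν ≤
      Real.exp ((Metric.diam (Set.univ : Set E)) ^ 2 / 8) := by
  have : Nonempty E := nonempty_of_isProbabilityMeasure ν
  obtain ⟨a, ha⟩ := exists_forall_mem_Icc_of_sub_le (hf.sub_le_diam hD)
  simpa using integral_exp_sub_integral_le_of_mem_Icc hf.continuous.aemeasurable
    (ae_of_all ν ha)
end

section
/- Let ν be a probability measure on a metric space (E,d) such that for every bounded Lipschitz f, E^ν e^{f - ν(f)} ≤ exp(K‖f‖²_Lip / 2). Then for the function F(x) = (1/√n)∑_{i=1}^n (f(x_i) - E f) on E^n with the ℓ¹-sum metric and a Lipschitz f, the Gaussian integrability transfers to give E e^{λF} ≤ exp(K λ² ‖f‖²_Lip / 2) under the product measure ν^{⊗n}. -/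
/-!
Under `ν^{⊗n}` the coordinates are independent, so `E e^{λF}` factors as the `n`-th power of
`E^ν e^{c (f - ν f)}` with `c = λ/√n`. The function `c (f - ν f)` is bounded, centred and
`|c| ‖f‖_Lip`-Lipschitz, so the hypothesis bounds each factor by `exp(K λ² ‖f‖²_Lip / (2n))`.
-/

open MeasureTheory

def GaussianIntegrability {E : Type*} [MeasurableSpace E] [PseudoMetricSpace E]
    (ν : Measure E) (K : ℝ) : Prop :=
  ∀ (g : E → ℝ) (Lg : NNReal), LipschitzWith Lg g → (∃ M, ∀ x, |g x| ≤ M) →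
    ∫ x, Real.exp (g x - ∫ y, g y ∂ν) ∂ν ≤ Real.exp (K * (Lg : ℝ) ^ 2 / 2)

theorem integral_exp_sum_pi_eq_pow {ι E : Type*} [Fintype ι] [MeasurableSpace E]
    (ν : Measure E) [SigmaFinite ν] (g : E → ℝ) :
    ∫ x, Real.exp (∑ i, g (x i)) ∂(Measure.pi fun _ : ι => ν) =
      (∫ y, Real.exp (g y) ∂ν) ^ Fintype.card ι := by
  simp_rw [Real.exp_sum]
  exact integral_fintype_prod_eq_pow (μ := ν) fun y => Real.exp (g y)

theorem integral_const_mul_sub_integral {E : Type*} [MeasurableSpace E] {ν : Measure E}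
    [IsProbabilityMeasure ν] {f : E → ℝ} (hf : Integrable f ν) (c : ℝ) :
    ∫ x, c * (f x - ∫ y, f y ∂ν) ∂ν = 0 := by
  rw [integral_const_mul, integral_sub hf (integrable_const _), integral_const]
  simp

section

variable {E : Type*} [MeasurableSpace E] [PseudoMetricSpace E] [OpensMeasurableSpace E]
  {ν : Measure E} {f : E → ℝ} {Lf : NNReal}

theorem LipschitzWith.integrable_of_bounded [IsFiniteMeasure ν] (hf : LipschitzWith Lf f)
    (hfb : ∃ M, ∀ x, |f x| ≤ M) : Integrable f ν :=
  let ⟨M, hM⟩ := hfb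
  Integrable.of_bound hf.continuous.aestronglyMeasurable M (ae_of_all _ hM)

theorem GaussianIntegrability.integral_exp_const_mul_sub_integral_le [IsProbabilityMeasure ν]
    {K : ℝ} (hν : GaussianIntegrability ν K) (hf : LipschitzWith Lf f)
    (hfb : ∃ M, ∀ x, |f x| ≤ M) (c : ℝ) :
    ∫ x, Real.exp (c * (f x - ∫ y, f y ∂ν)) ∂ν ≤ Real.exp (K * c ^ 2 * (Lf : ℝ) ^ 2 / 2) := by
  set m := ∫ y, f y ∂ν
  have hLip : LipschitzWith (‖c‖₊ * Lf) fun x => c * (f x - m) := by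
    simpa [Function.comp_def] using (lipschitzWith_smul c).comp (hf.sub (LipschitzWith.const m))
  have hbdd : ∃ M, ∀ x, |c * (f x - m)| ≤ M := by
    obtain ⟨M, hM⟩ := hfb
    refine ⟨|c| * (M + |m|), fun x => ?_⟩
    rw [abs_mul]
    gcongr
    exact (abs_sub _ _).trans (add_le_add_left (hM x) _)
  have h := hν _ _ hLip hbdd
  rw [integral_const_mul_sub_integral (hf.integrable_of_bounded hfb)] at h
  simp only [sub_zero] at h
  convert h using 3
  push_cast
  rw [mul_pow, Real.norm_eq_abs, sq_abs]
  ring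

end

theorem gaussian_integrability_tensorization_general
    {E : Type*} [MeasurableSpace E] [MetricSpace E] [BorelSpace E]
    (ν : Measure E) [IsProbabilityMeasure ν] (K : ℝ)
    (hGauss : ∀ (g : E → ℝ) (Lg : NNReal), LipschitzWith Lg g → (∃ M, ∀ x, |g x| ≤ M) →
      ∫ x, Real.exp (g x - ∫ y, g y ∂ν) ∂ν ≤ Real.exp (K * (Lg : ℝ) ^ 2 / 2))
    (n : ℕ) (hn : 0 < n)
    (f : E → ℝ) (Lf : NNReal) (hf : LipschitzWith Lf f) (hfb : ∃ M, ∀ x, |f x| ≤ M)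
    (F : (Fin n → E) → ℝ)
    (hF : F = fun x => (1 / Real.sqrt n) * ∑ i, (f (x i) - ∫ y, f y ∂ν)) :
    ∀ lam : ℝ,
      ∫ x, Real.exp (lam * F x) ∂(Measure.pi fun _ : Fin n => ν) ≤
        Real.exp (K * lam ^ 2 * (Lf : ℝ) ^ 2 / 2) := by
  intro lam
  subst hF
  have hsqrt : Real.sqrt n ^ 2 = n := Real.sq_sqrt n.cast_nonneg
  calc ∫ x, Real.exp (lam * ((1 / Real.sqrt n) * ∑ i, (f (x i) - ∫ y, f y ∂ν)))
          ∂(Measure.pi fun _ : Fin n => ν)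
      = ∫ x, Real.exp (∑ i, lam / Real.sqrt n * (f (x i) - ∫ y, f y ∂ν))
          ∂(Measure.pi fun _ : Fin n => ν) := by
        simp_rw [← Finset.mul_sum, ← mul_assoc, mul_one_div]
    _ = (∫ y, Real.exp (lam / Real.sqrt n * (f y - ∫ y, f y ∂ν)) ∂ν) ^ n := by
        rw [integral_exp_sum_pi_eq_pow ν fun y => lam / Real.sqrt n * (f y - ∫ y, f y ∂ν),
          Fintype.card_fin]
    _ ≤ Real.exp (K * (lam / Real.sqrt n) ^ 2 * (Lf : ℝ) ^ 2 / 2) ^ n :=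
        pow_le_pow_left₀ (integral_nonneg fun _ => (Real.exp_pos _).le)
          (GaussianIntegrability.integral_exp_const_mul_sub_integral_le hGauss hf hfb _) n
    _ = Real.exp (K * lam ^ 2 * (Lf : ℝ) ^ 2 / 2) := by
        have hn' : (n : ℝ) ≠ 0 := by exact_mod_cast hn.ne'
        rw [← Real.exp_nat_mul, div_pow, hsqrt]
        field_simp

/-- Tensorization of Gaussian integrability: let `ν` be a probability measure on a metric
space `(E,d)` such that every bounded Lipschitz `g` satisfies
`E^ν e^{g - ν(g)} ≤ exp(K ‖g‖²_Lip / 2)`. Then for `F(x) = (1/√n) ∑_{i=1}^n (f(x_i) - E^ν f)`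
on `E^n` (with the `ℓ¹`-sum metric, `F` being `‖f‖_Lip/√n`-Lipschitz in each coordinate)
and any Lipschitz bounded `f`, under the product measure `ν^{⊗n}` one has
`E e^{λ F} ≤ exp(K λ² ‖f‖²_Lip / 2)` for all `λ ∈ ℝ`. -/
theorem gaussian_integrability_tensorization
    {E : Type*} [MeasurableSpace E] [MetricSpace E] [BorelSpace E]
    (ν : Measure E) [IsProbabilityMeasure ν] (K : ℝ) (hK : 0 < K)
    (hGauss : ∀ (g : E → ℝ) (Lg : NNReal), LipschitzWith Lg g → (∃ M, ∀ x, |g x| ≤ M) →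
      ∫ x, Real.exp (g x - ∫ y, g y ∂ν) ∂ν ≤ Real.exp (K * (Lg : ℝ) ^ 2 / 2))
    (n : ℕ) (hn : 0 < n)
    (f : E → ℝ) (Lf : NNReal) (hf : LipschitzWith Lf f) (hfb : ∃ M, ∀ x, |f x| ≤ M)
    (F : (Fin n → E) → ℝ)
    (hF : F = fun x => (1 / Real.sqrt n) * ∑ i, (f (x i) - ∫ y, f y ∂ν)) :
    ∀ lam : ℝ,
      ∫ x, Real.exp (lam * F x) ∂(Measure.pi fun _ : Fin n => ν) ≤
        Real.exp (K * lam ^ 2 * (Lf : ℝ) ^ 2 / 2) :=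
  gaussian_integrability_tensorization_general ν K hGauss n hn f Lf hf hfb F hF
end

section
/- Let ψ₀, ψ₁ be Lipschitz functions on ℝ with ‖ψ₁-ψ₀‖_Lip ≤ L, μ_t the probability measures proportional to e^{ψ₀ + t(ψ₁-ψ₀)} m(dx) for a reference probability measure m. Then for any 1-Lipschitz f, the covariance bound |μ_t(f; ψ₁-ψ₀)| ≤ L · μ_t(x;x) holds, where μ_t(x;x) is the variance of the identity under μ_t; consequently |∫ f d(μ₁-μ₀)| ≤ L · sup_t μ_t(x;x). -/
/-!
Writing `g = ψ₁ - ψ₀`, the covariance has the symmetrized form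
`2 μ_t(f; g) = ∬ (f x - f y) (g x - g y) dμ_t dμ_t`, and the integrand is bounded pointwise by
`L (x - y)²`, whose double integral is `2 L μ_t(x; x)`.

For the second bound, `t ↦ μ_t(f) = (∫ f e^{ψ₀ + t g} dm) / (∫ e^{ψ₀ + t g} dm)` has derivative
`μ_t(f; g)`: on `[0, 1]` the weights `e^{ψ₀ + t g}` are dominated by `e^{ψ₀} + e^{ψ₁}`, so one may
differentiate under the integral. The mean value theorem then gives
`μ₁(f) - μ₀(f) = μ_c(f; g)` for some `c ∈ (0, 1)`, and the variance is bounded on `[0, 1]`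
because it is continuous there.
-/

open MeasureTheory ProbabilityTheory Set Real

theorem LipschitzWith.comp_memLp_of_isFiniteMeasure {α E F : Type*} [MeasurableSpace α]
    {μ : Measure α} [IsFiniteMeasure μ] [NormedAddCommGroup E] [NormedAddCommGroup F] {p : ENNReal}
    {K : NNReal} {g : E → F} {f : α → E} (hg : LipschitzWith K g) (hf : MemLp f p μ) :
    MemLp (g ∘ f) p μ := by
  have hg₀ : LipschitzWith K fun x => g x - g 0 :=
    (hg.sub (LipschitzWith.const _)).weaken (by simp)
  convert (hg₀.comp_memLp (by simp) hf).add (memLp_const (g 0)) using 1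
  ext; simp

section Symmetrization

variable {Ω : Type*} [MeasurableSpace Ω] {μ : Measure Ω} [IsProbabilityMeasure μ]
  {u v : Ω → ℝ}

theorem integrable_prod_sub_mul_sub (hu : MemLp u 2 μ) (hv : MemLp v 2 μ) :
    Integrable (fun z : Ω × Ω => (u z.1 - u z.2) * (v z.1 - v z.2)) (μ.prod μ) := by
  have hu' : MemLp (fun z : Ω × Ω => u z.1 - u z.2) 2 (μ.prod μ) :=
    (hu.comp_fst μ).sub (hu.comp_snd μ)
  have hv' : MemLp (fun z : Ω × Ω => v z.1 - v z.2) 2 (μ.prod μ) :=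
    (hv.comp_fst μ).sub (hv.comp_snd μ)
  exact hu'.integrable_mul hv'

theorem integral_prod_sub_mul_sub (hu : MemLp u 2 μ) (hv : MemLp v 2 μ) :
    ∫ z, (u z.1 - u z.2) * (v z.1 - v z.2) ∂(μ.prod μ) = 2 * cov[u, v; μ] := by
  have huv : Integrable (fun x => u x * v x) μ := hu.integrable_mul hv
  have hu₁ := hu.integrable one_le_two
  have hv₁ := hv.integrable one_le_two
  have hdiag : Integrable (fun z : Ω × Ω => u z.1 * v z.1 + u z.2 * v z.2) (μ.prod μ) :=
    (huv.comp_fst μ).add (huv.comp_snd μ)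
  have hcross : Integrable (fun z : Ω × Ω => u z.1 * v z.2 + v z.1 * u z.2) (μ.prod μ) :=
    (hu₁.mul_prod hv₁).add (hv₁.mul_prod hu₁)
  have expand : (fun z : Ω × Ω => (u z.1 - u z.2) * (v z.1 - v z.2)) =
      fun z => (u z.1 * v z.1 + u z.2 * v z.2) - (u z.1 * v z.2 + v z.1 * u z.2) := by
    ext z; ring
  rw [expand, integral_sub hdiag hcross, integral_add (huv.comp_fst μ) (huv.comp_snd μ),
    integral_add (hu₁.mul_prod hv₁) (hv₁.mul_prod hu₁),
    integral_fun_fst (fun x => u x * v x), integral_fun_snd (fun x => u x * v x),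
    integral_prod_mul u v, integral_prod_mul v u, covariance_eq_sub hu hv]
  simp only [probReal_univ, one_smul, Pi.mul_apply]
  ring

end Symmetrization

theorem abs_covariance_le_mul_variance {μ : Measure ℝ} [IsProbabilityMeasure μ] {u v : ℝ → ℝ}
    {K K' : NNReal} (hu : LipschitzWith K u) (hv : LipschitzWith K' v) (hid : MemLp id 2 μ) :
    |cov[u, v; μ]| ≤ K * K' * Var[id; μ] := by
  have hu₂ : MemLp u 2 μ := hu.comp_memLp_of_isFiniteMeasure hid
  have hv₂ : MemLp v 2 μ := hv.comp_memLp_of_isFiniteMeasure hid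
  have hpointwise : ∀ z : ℝ × ℝ, ‖(u z.1 - u z.2) * (v z.1 - v z.2)‖ ≤
      K * K' * ((id z.1 - id z.2) * (id z.1 - id z.2)) := fun z => by
    rw [Real.norm_eq_abs, abs_mul, ← abs_mul_abs_self (id z.1 - id z.2)]
    have hu' := hu.dist_le_mul z.1 z.2
    have hv' := hv.dist_le_mul z.1 z.2
    simp only [Real.dist_eq, id] at *
    nlinarith [abs_nonneg (u z.1 - u z.2), abs_nonneg (v z.1 - v z.2), abs_nonneg (z.1 - z.2)]
  have htwice : 2 * |cov[u, v; μ]| ≤ 2 * (K * K' * Var[id; μ]) := by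
    calc 2 * |cov[u, v; μ]| = ‖∫ z, (u z.1 - u z.2) * (v z.1 - v z.2) ∂(μ.prod μ)‖ := by
          rw [integral_prod_sub_mul_sub hu₂ hv₂, Real.norm_eq_abs, abs_mul, abs_two]
      _ ≤ ∫ z, K * K' * ((id z.1 - id z.2) * (id z.1 - id z.2)) ∂(μ.prod μ) :=
          norm_integral_le_of_norm_le ((integrable_prod_sub_mul_sub hid hid).const_mul _)
            (ae_of_all _ hpointwise)
      _ = 2 * (K * K' * Var[id; μ]) := by
          rw [integral_const_mul, integral_prod_sub_mul_sub hid hid,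
            covariance_self aemeasurable_id]
          ring
  linarith

theorem exp_add_mul_sub_le_exp_add_exp {a b s : ℝ} (hs : s ∈ Icc (0 : ℝ) 1) :
    exp (a + s * (b - a)) ≤ exp a + exp b := by
  obtain ⟨hs₀, hs₁⟩ := hs
  rcases le_total a b with hab | hba
  · have : exp (a + s * (b - a)) ≤ exp b := exp_le_exp.2 (by nlinarith)
    linarith [exp_pos a]
  · have : exp (a + s * (b - a)) ≤ exp a := exp_le_exp.2 (by nlinarith)
    linarith [exp_pos b]

theorem norm_mul_exp_add_mul_sub_le (c : ℝ) {a b s : ℝ} (hs : s ∈ Icc (0 : ℝ) 1) :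
    ‖c * exp (a + s * (b - a))‖ ≤ ‖c * exp a‖ + ‖c * exp b‖ := by
  simp only [norm_mul, norm_of_nonneg (exp_pos _).le, ← mul_add]
  exact mul_le_mul_of_nonneg_left (exp_add_mul_sub_le_exp_add_exp hs) (norm_nonneg c)

section Interpolation

variable {α : Type*} [MeasurableSpace α] {m : Measure α} {ψ₀ ψ₁ h : α → ℝ}

theorem aestronglyMeasurable_mul_exp_interpolate (hψ₀ : AEMeasurable ψ₀ m)
    (hψ₁ : AEMeasurable ψ₁ m) (hh : AEStronglyMeasurable (fun x => h x * exp (ψ₀ x)) m) (s : ℝ) :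
    AEStronglyMeasurable (fun x => h x * exp (ψ₀ x + s * (ψ₁ x - ψ₀ x))) m := by
  have htilt : AEStronglyMeasurable (fun x => exp (s * (ψ₁ x - ψ₀ x))) m :=
    (by fun_prop : AEMeasurable (fun x => exp (s * (ψ₁ x - ψ₀ x))) m).aestronglyMeasurable
  refine (hh.mul htilt).congr (ae_of_all _ fun x => ?_)
  simp only [Pi.mul_apply, exp_add]
  ring

theorem integrable_mul_exp_interpolate (hψ₀ : AEMeasurable ψ₀ m) (hψ₁ : AEMeasurable ψ₁ m)
    (h₀ : Integrable (fun x => h x * exp (ψ₀ x)) m) (h₁ : Integrable (fun x => h x * exp (ψ₁ x)) m)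
    {s : ℝ} (hs : s ∈ Icc (0 : ℝ) 1) :
    Integrable (fun x => h x * exp (ψ₀ x + s * (ψ₁ x - ψ₀ x))) m :=
  (h₀.norm.add h₁.norm).mono' (aestronglyMeasurable_mul_exp_interpolate hψ₀ hψ₁ h₀.1 s)
    (ae_of_all _ fun _ => norm_mul_exp_add_mul_sub_le _ hs)

theorem continuousOn_integral_mul_exp_interpolate (hψ₀ : AEMeasurable ψ₀ m)
    (hψ₁ : AEMeasurable ψ₁ m) (h₀ : Integrable (fun x => h x * exp (ψ₀ x)) m)
    (h₁ : Integrable (fun x => h x * exp (ψ₁ x)) m) :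
    ContinuousOn (fun s => ∫ x, h x * exp (ψ₀ x + s * (ψ₁ x - ψ₀ x)) ∂m) (Icc 0 1) :=
  continuousOn_of_dominated (fun s _ => aestronglyMeasurable_mul_exp_interpolate hψ₀ hψ₁ h₀.1 s)
    (fun _ hs => ae_of_all _ fun _ => norm_mul_exp_add_mul_sub_le _ hs) (h₀.norm.add h₁.norm)
    (ae_of_all _ fun _ => by fun_prop)

theorem hasDerivAt_integral_mul_exp_interpolate (hψ₀ : AEMeasurable ψ₀ m)
    (hψ₁ : AEMeasurable ψ₁ m) (h₀ : Integrable (fun x => h x * exp (ψ₀ x)) m)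
    (h₁ : Integrable (fun x => h x * exp (ψ₁ x)) m)
    (hg₀ : Integrable (fun x => h x * (ψ₁ x - ψ₀ x) * exp (ψ₀ x)) m)
    (hg₁ : Integrable (fun x => h x * (ψ₁ x - ψ₀ x) * exp (ψ₁ x)) m)
    {t : ℝ} (ht : t ∈ Ioo (0 : ℝ) 1) :
    HasDerivAt (fun s => ∫ x, h x * exp (ψ₀ x + s * (ψ₁ x - ψ₀ x)) ∂m)
      (∫ x, h x * (ψ₁ x - ψ₀ x) * exp (ψ₀ x + t * (ψ₁ x - ψ₀ x)) ∂m) t := by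
  refine (hasDerivAt_integral_of_dominated_loc_of_deriv_le
    (F' := fun s x => h x * (ψ₁ x - ψ₀ x) * exp (ψ₀ x + s * (ψ₁ x - ψ₀ x)))
    (bound := fun x => ‖h x * (ψ₁ x - ψ₀ x) * exp (ψ₀ x)‖ + ‖h x * (ψ₁ x - ψ₀ x) * exp (ψ₁ x)‖)
    (isOpen_Ioo.mem_nhds ht)
    (Filter.Eventually.of_forall fun s => aestronglyMeasurable_mul_exp_interpolate hψ₀ hψ₁ h₀.1 s)
    (integrable_mul_exp_interpolate hψ₀ hψ₁ h₀ h₁ (Ioo_subset_Icc_self ht))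
    (aestronglyMeasurable_mul_exp_interpolate hψ₀ hψ₁ hg₀.1 t)
    (ae_of_all _ fun _ s hs => norm_mul_exp_add_mul_sub_le _ (Ioo_subset_Icc_self hs))
    (hg₀.norm.add hg₁.norm) (ae_of_all _ fun x s _ => ?_)).2
  have := (((hasDerivAt_mul_const (x := s) (ψ₁ x - ψ₀ x)).const_add (ψ₀ x)).exp).const_mul (h x)
  exact this.congr_deriv (by ring)

theorem integral_tilted_eq_div (f h : α → ℝ) :
    ∫ x, h x ∂(m.tilted f) = (∫ x, h x * exp (f x) ∂m) / ∫ x, exp (f x) ∂m := by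
  rw [integral_tilted, ← integral_div]
  congr 1 with x
  rw [smul_eq_mul]; ring

theorem integrable_mul_exp_of_integrable_tilted {f : α → ℝ}
    (hf : Integrable (fun x => exp (f x)) m) (hh : Integrable h (m.tilted f)) :
    Integrable (fun x => h x * exp (f x)) m := by
  simpa only [smul_eq_mul, mul_comm] using (integrable_tilted_iff hf h).1 hh

variable [NeZero m]

theorem continuousOn_integral_tilted_interpolate
    (hZ₀ : Integrable (fun x => exp (ψ₀ x)) m) (hZ₁ : Integrable (fun x => exp (ψ₁ x)) m)
    (h₀ : Integrable h (m.tilted ψ₀)) (h₁ : Integrable h (m.tilted ψ₁)) :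
    ContinuousOn (fun s => ∫ x, h x ∂(m.tilted fun x => ψ₀ x + s * (ψ₁ x - ψ₀ x))) (Icc 0 1) := by
  have hψ₀ := aemeasurable_of_aemeasurable_exp hZ₀.1.aemeasurable
  have hψ₁ := aemeasurable_of_aemeasurable_exp hZ₁.1.aemeasurable
  have hZ₀' : Integrable (fun x => 1 * exp (ψ₀ x)) m := by simpa using hZ₀
  have hZ₁' : Integrable (fun x => 1 * exp (ψ₁ x)) m := by simpa using hZ₁
  simp only [integral_tilted_eq_div]
  refine (continuousOn_integral_mul_exp_interpolate hψ₀ hψ₁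
    (integrable_mul_exp_of_integrable_tilted hZ₀ h₀)
    (integrable_mul_exp_of_integrable_tilted hZ₁ h₁)).div ?_ fun s hs => ?_
  · simpa using continuousOn_integral_mul_exp_interpolate hψ₀ hψ₁ hZ₀' hZ₁'
  · exact (integral_exp_pos
      (by simpa using integrable_mul_exp_interpolate hψ₀ hψ₁ hZ₀' hZ₁' hs)).ne'

theorem hasDerivAt_integral_tilted_interpolate
    (hZ₀ : Integrable (fun x => exp (ψ₀ x)) m) (hZ₁ : Integrable (fun x => exp (ψ₁ x)) m)
    (hh₀ : MemLp h 2 (m.tilted ψ₀)) (hh₁ : MemLp h 2 (m.tilted ψ₁))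
    (hg₀ : MemLp (fun x => ψ₁ x - ψ₀ x) 2 (m.tilted ψ₀))
    (hg₁ : MemLp (fun x => ψ₁ x - ψ₀ x) 2 (m.tilted ψ₁)) {t : ℝ} (ht : t ∈ Ioo (0 : ℝ) 1) :
    HasDerivAt (fun s => ∫ x, h x ∂(m.tilted fun x => ψ₀ x + s * (ψ₁ x - ψ₀ x)))
      ((∫ x, h x * (ψ₁ x - ψ₀ x) ∂(m.tilted fun x => ψ₀ x + t * (ψ₁ x - ψ₀ x))) -
        (∫ x, h x ∂(m.tilted fun x => ψ₀ x + t * (ψ₁ x - ψ₀ x))) *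
          ∫ x, ψ₁ x - ψ₀ x ∂(m.tilted fun x => ψ₀ x + t * (ψ₁ x - ψ₀ x))) t := by
  have := isProbabilityMeasure_tilted hZ₀
  have := isProbabilityMeasure_tilted hZ₁
  have hψ₀ := aemeasurable_of_aemeasurable_exp hZ₀.1.aemeasurable
  have hψ₁ := aemeasurable_of_aemeasurable_exp hZ₁.1.aemeasurable
  have hZ₀' : Integrable (fun x => 1 * exp (ψ₀ x)) m := by simpa using hZ₀
  have hZ₁' : Integrable (fun x => 1 * exp (ψ₁ x)) m := by simpa using hZ₁
  have hN := hasDerivAt_integral_mul_exp_interpolate hψ₀ hψ₁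
    (integrable_mul_exp_of_integrable_tilted hZ₀ (hh₀.integrable one_le_two))
    (integrable_mul_exp_of_integrable_tilted hZ₁ (hh₁.integrable one_le_two))
    (integrable_mul_exp_of_integrable_tilted hZ₀ (hh₀.integrable_mul hg₀))
    (integrable_mul_exp_of_integrable_tilted hZ₁ (hh₁.integrable_mul hg₁)) ht
  have hZ := hasDerivAt_integral_mul_exp_interpolate hψ₀ hψ₁ hZ₀' hZ₁'
    (by simpa using integrable_mul_exp_of_integrable_tilted hZ₀ (hg₀.integrable one_le_two))
    (by simpa using integrable_mul_exp_of_integrable_tilted hZ₁ (hg₁.integrable one_le_two)) ht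
  simp only [one_mul] at hZ
  have hZt := (integral_exp_pos (by
    simpa using integrable_mul_exp_interpolate hψ₀ hψ₁ hZ₀' hZ₁' (Ioo_subset_Icc_self ht))).ne'
  simp only [integral_tilted_eq_div]
  refine (hN.div hZ hZt).congr_deriv ?_
  generalize ∫ x, exp (ψ₀ x + t * (ψ₁ x - ψ₀ x)) ∂m = Z at hZt ⊢
  generalize ∫ x, h x * (ψ₁ x - ψ₀ x) * exp (ψ₀ x + t * (ψ₁ x - ψ₀ x)) ∂m = A
  field_simp

end Interpolation

theorem abs_sub_le_mul_sSup_of_hasDerivAt {F F' V : ℝ → ℝ} {L a b : ℝ} (hab : a < b)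
    (hL : 0 ≤ L) (hF : ContinuousOn F (Icc a b)) (hF' : ∀ t ∈ Ioo a b, HasDerivAt F (F' t) t)
    (hbound : ∀ t ∈ Ioo a b, |F' t| ≤ L * V t) (hV : ContinuousOn V (Icc a b)) :
    |F b - F a| ≤ L * sSup (V '' Icc a b) * (b - a) := by
  obtain ⟨c, hc, hslope⟩ := exists_hasDerivAt_eq_slope F F' hab hF hF'
  have hVc : V c ≤ sSup (V '' Icc a b) :=
    le_csSup (isCompact_Icc.image_of_continuousOn hV).bddAbove
      (mem_image_of_mem V (Ioo_subset_Icc_self hc))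
  calc |F b - F a| = |F' c| * (b - a) := by
        rw [hslope, abs_div, abs_of_pos (sub_pos.2 hab), div_mul_cancel₀ _ (sub_pos.2 hab).ne']
    _ ≤ L * sSup (V '' Icc a b) * (b - a) := by
        gcongr
        exact (hbound c hc).trans (mul_le_mul_of_nonneg_left hVc hL)

theorem covariance_bound_tilted_interpolation_general
    (m : Measure ℝ) [IsProbabilityMeasure m]
    (ψ₀ ψ₁ : ℝ → ℝ)
    (L : ℝ) (hL0 : 0 ≤ L)
    (hL : LipschitzWith (Real.toNNReal L) fun x => ψ₁ x - ψ₀ x)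
    (Z : ℝ → ℝ) (hZ : ∀ t, Z t = ∫ x, Real.exp (ψ₀ x + t * (ψ₁ x - ψ₀ x)) ∂m)
    (hexp : ∀ t ∈ Set.Icc (0 : ℝ) 1,
      Integrable (fun x => Real.exp (ψ₀ x + t * (ψ₁ x - ψ₀ x))) m)
    (μ : ℝ → Measure ℝ)
    (hμ : ∀ t, μ t = m.withDensity fun x =>
      ENNReal.ofReal (Real.exp (ψ₀ x + t * (ψ₁ x - ψ₀ x)) / Z t))
    (hmom : ∀ t ∈ Set.Icc (0 : ℝ) 1, MemLp (fun x : ℝ => x) 2 (μ t))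
    (f : ℝ → ℝ) (hf : LipschitzWith 1 f) :
    (∀ t ∈ Set.Icc (0 : ℝ) 1,
      |(∫ x, f x * (ψ₁ x - ψ₀ x) ∂(μ t)) -
          (∫ x, f x ∂(μ t)) * ∫ x, ψ₁ x - ψ₀ x ∂(μ t)| ≤
        L * ((∫ x, x ^ 2 ∂(μ t)) - (∫ x, x ∂(μ t)) ^ 2)) ∧
    |(∫ x, f x ∂(μ 1)) - ∫ x, f x ∂(μ 0)| ≤
      L * sSup ((fun t => (∫ x, x ^ 2 ∂(μ t)) - (∫ x, x ∂(μ t)) ^ 2) '' Set.Icc 0 1) := by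
  have hμt : ∀ t, μ t = m.tilted fun x => ψ₀ x + t * (ψ₁ x - ψ₀ x) := fun t => by
    rw [hμ, Measure.tilted, hZ]
  have hZ₀ : Integrable (fun x => exp (ψ₀ x)) m := by simpa using hexp 0 (by simp)
  have hZ₁ : Integrable (fun x => exp (ψ₁ x)) m := by simpa using hexp 1 (by simp)
  have := isProbabilityMeasure_tilted hZ₀
  have := isProbabilityMeasure_tilted hZ₁
  have hid₀ : MemLp (fun x : ℝ => x) 2 (m.tilted ψ₀) := by simpa [hμt] using hmom 0 (by simp)
  have hid₁ : MemLp (fun x : ℝ => x) 2 (m.tilted ψ₁) := by simpa [hμt] using hmom 1 (by simp)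
  have hcov : ∀ t ∈ Icc (0 : ℝ) 1,
      |(∫ x, f x * (ψ₁ x - ψ₀ x) ∂(μ t)) - (∫ x, f x ∂(μ t)) * ∫ x, ψ₁ x - ψ₀ x ∂(μ t)| ≤
        L * ((∫ x, x ^ 2 ∂(μ t)) - (∫ x, x ∂(μ t)) ^ 2) := fun t ht => by
    have : IsProbabilityMeasure (μ t) := hμt t ▸ isProbabilityMeasure_tilted (hexp t ht)
    have hbound := abs_covariance_le_mul_variance hf hL (hmom t ht)
    have hf₂ : MemLp f 2 (μ t) := hf.comp_memLp_of_isFiniteMeasure (hmom t ht)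
    have hg₂ : MemLp (fun x => ψ₁ x - ψ₀ x) 2 (μ t) :=
      hL.comp_memLp_of_isFiniteMeasure (hmom t ht)
    rw [covariance_eq_sub hf₂ hg₂, variance_eq_sub (X := id) (hmom t ht),
      Real.coe_toNNReal _ hL0] at hbound
    simpa using hbound
  refine ⟨hcov, ?_⟩
  set V := fun t => (∫ x, x ^ 2 ∂(μ t)) - (∫ x, x ∂(μ t)) ^ 2
  have hV : ContinuousOn V (Icc 0 1) := by
    simp only [V, hμt]
    exact (continuousOn_integral_tilted_interpolate hZ₀ hZ₁ hid₀.integrable_sq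
      hid₁.integrable_sq).sub ((continuousOn_integral_tilted_interpolate hZ₀ hZ₁
        (hid₀.integrable one_le_two) (hid₁.integrable one_le_two)).pow 2)
  have hf₀ : MemLp f 2 (m.tilted ψ₀) := hf.comp_memLp_of_isFiniteMeasure hid₀
  have hf₁ : MemLp f 2 (m.tilted ψ₁) := hf.comp_memLp_of_isFiniteMeasure hid₁
  have hF : ContinuousOn (fun s => ∫ x, f x ∂(μ s)) (Icc 0 1) := by
    simpa only [hμt] using continuousOn_integral_tilted_interpolate hZ₀ hZ₁
      (hf₀.integrable one_le_two) (hf₁.integrable one_le_two)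
  have hF' : ∀ t ∈ Ioo (0 : ℝ) 1, HasDerivAt (fun s => ∫ x, f x ∂(μ s))
      ((∫ x, f x * (ψ₁ x - ψ₀ x) ∂(μ t)) - (∫ x, f x ∂(μ t)) * ∫ x, ψ₁ x - ψ₀ x ∂(μ t)) t :=
    fun t ht => by
      simpa only [hμt] using hasDerivAt_integral_tilted_interpolate hZ₀ hZ₁ hf₀ hf₁
        (hL.comp_memLp_of_isFiniteMeasure hid₀) (hL.comp_memLp_of_isFiniteMeasure hid₁) ht
  simpa using abs_sub_le_mul_sSup_of_hasDerivAt one_pos hL0 hF hF'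
    (fun t ht => hcov t (Ioo_subset_Icc_self ht)) hV

/-- Covariance bound along an interpolation of tilted measures: let `ψ₀, ψ₁` be Lipschitz
with `‖ψ₁ - ψ₀‖_Lip ≤ L`, and let `μ_t ∝ e^{ψ₀ + t(ψ₁-ψ₀)} m` for a reference probability
measure `m` (with enough exponential/second moments). Then for every `1`-Lipschitz `f` and
`t ∈ [0,1]`, `|Cov_{μ_t}(f, ψ₁-ψ₀)| ≤ L · Var_{μ_t}(x)`, and consequently
`|∫ f d(μ₁ - μ₀)| ≤ L · sup_{t∈[0,1]} Var_{μ_t}(x)`. -/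
theorem covariance_bound_tilted_interpolation
    (m : Measure ℝ) [IsProbabilityMeasure m]
    (ψ₀ ψ₁ : ℝ → ℝ) (L₀ L₁ : NNReal)
    (hψ₀ : LipschitzWith L₀ ψ₀) (hψ₁ : LipschitzWith L₁ ψ₁)
    (L : ℝ) (hL0 : 0 ≤ L)
    (hL : LipschitzWith (Real.toNNReal L) fun x => ψ₁ x - ψ₀ x)
    (Z : ℝ → ℝ) (hZ : ∀ t, Z t = ∫ x, Real.exp (ψ₀ x + t * (ψ₁ x - ψ₀ x)) ∂m)
    (hZpos : ∀ t ∈ Set.Icc (0 : ℝ) 1, 0 < Z t)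
    (hexp : ∀ t ∈ Set.Icc (0 : ℝ) 1,
      Integrable (fun x => Real.exp (ψ₀ x + t * (ψ₁ x - ψ₀ x))) m)
    (μ : ℝ → Measure ℝ)
    (hμ : ∀ t, μ t = m.withDensity fun x =>
      ENNReal.ofReal (Real.exp (ψ₀ x + t * (ψ₁ x - ψ₀ x)) / Z t))
    (hmom : ∀ t ∈ Set.Icc (0 : ℝ) 1, MemLp (fun x : ℝ => x) 2 (μ t))
    (hψmom : ∀ t ∈ Set.Icc (0 : ℝ) 1, MemLp (fun x => ψ₁ x - ψ₀ x) 2 (μ t))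
    (f : ℝ → ℝ) (hf : LipschitzWith 1 f)
    (hfmom : ∀ t ∈ Set.Icc (0 : ℝ) 1, MemLp f 2 (μ t)) :
    (∀ t ∈ Set.Icc (0 : ℝ) 1,
      |(∫ x, f x * (ψ₁ x - ψ₀ x) ∂(μ t)) -
          (∫ x, f x ∂(μ t)) * ∫ x, ψ₁ x - ψ₀ x ∂(μ t)| ≤
        L * ((∫ x, x ^ 2 ∂(μ t)) - (∫ x, x ∂(μ t)) ^ 2)) ∧
    |(∫ x, f x ∂(μ 1)) - ∫ x, f x ∂(μ 0)| ≤
      L * sSup ((fun t => (∫ x, x ^ 2 ∂(μ t)) - (∫ x, x ∂(μ t)) ^ 2) '' Set.Icc 0 1) :=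
  covariance_bound_tilted_interpolation_general m ψ₀ ψ₁ L hL0 hL Z hZ hexp μ hμ hmom f hf
end
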